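/- (Feasibility of the compound-symmetric solution.) Consider the semidefinite program with data Ω = [[ v·P + μ̄²·11ᵀ, μ̄·1 ],[ μ̄·1ᵀ, 1 ]], where P = circ(ρ) is a symmetric positive semidefinite circulant matrix with ρ_0 = 1 and ρ_t = ρ_{(T−t) mod T}, v ≥ 0, μ̄ ∈ ℝ, ε ∈ (0,1). Suppose M = [[circ(m), m_T·1],[m_T·1ᵀ, m_{T+1}]] with m_t = m_{(T−t) mod T}, together with β, γ ∈ ℝ, satisfies: M ⪰ 0, β + (1/ε)·tr(Ω M) ≤ 0, and M − [[ (1/2)·I, −(1/2)·1 ],[ −(1/2)·1ᵀ, γT − β ]] ⪰ 0. Set s = (∑_{t=0}^{T−1} m_t) − 1/2 and define m'_0 = s/T + 1/2, m'_t = s/T for t = 1, …, T−1, and M' = [[circ(m'), m_T·1],[m_T·1ᵀ, m_{T+1}]]. Then (M', β, γ) satisfies the same three constraints: M' ⪰ 0, β + (1/ε)·tr(Ω M') ≤ 0, and M' − [[ (1/2)·I, −(1/2)·1 ],[ −(1/2)·1ᵀ, γT − β ]] ⪰ 0. -/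

import Mathlib

/-!
Write `J = 11ᵀ`, `Q = I - J/T`, `R = diag(J/T, 1)` and `C` for `constrMatrix T γ β`. Every
circulant has all row and column sums equal to the sum of its symbol, so conjugating by `R`
replaces `circ m` by a multiple of `J`: this gives `M' = R M R + diag(Q/2, 0)` and
`M' - C = R (M - C) R`, and both semidefinite constraints pass to `M'` by congruence. For the
trace constraint, `circ m - circ m' = Q A Q` with `A = circ m - I/2 ⪰ 0` (the top-left block of
`M - C`); `J` annihilates it, so `tr(Ω M) - tr(Ω M') = v tr(P Q A Q) ≥ 0`.
-/

noncomputable section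

/-- The circulant matrix `circ c` with entries `c ((j - i) mod T)`. -/
def circ (T : ℕ) (c : Fin T → ℝ) : Matrix (Fin T) (Fin T) ℝ :=
  Matrix.of fun i j => c (j - i)

/-- Bordered matrix `[[C, b·1], [b·1ᵀ, d]]`. -/
def border (T : ℕ) (C : Matrix (Fin T) (Fin T) ℝ) (b d : ℝ) :
    Matrix (Fin T ⊕ Unit) (Fin T ⊕ Unit) ℝ :=
  Matrix.fromBlocks C
    (Matrix.of fun (_ : Fin T) (_ : Unit) => b)
    (Matrix.of fun (_ : Unit) (_ : Fin T) => b)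
    (Matrix.of fun (_ : Unit) (_ : Unit) => d)

/-- The second-order moment matrix `Ω = [[v·P + μ̄²·11ᵀ, μ̄·1], [μ̄·1ᵀ, 1]]`. -/
def momentMatrix (T : ℕ) (v μbar : ℝ) (P : Matrix (Fin T) (Fin T) ℝ) :
    Matrix (Fin T ⊕ Unit) (Fin T ⊕ Unit) ℝ :=
  border T (v • P + μbar ^ 2 • Matrix.of fun (_ _ : Fin T) => (1 : ℝ)) μbar 1

/-- The matrix `[[(1/2)·I, -(1/2)·1], [-(1/2)·1ᵀ, γT - β]]` appearing in the second
semidefinite constraint. -/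
def constrMatrix (T : ℕ) (γ β : ℝ) : Matrix (Fin T ⊕ Unit) (Fin T ⊕ Unit) ℝ :=
  border T ((1 / 2 : ℝ) • (1 : Matrix (Fin T) (Fin T) ℝ)) (-(1 / 2)) (γ * T - β)

/-- The compound-symmetric averaging `m'` of `m`: with `s = (∑ t, m t) - 1/2`,
`m'_0 = s/T + 1/2` and `m'_t = s/T` for `t ≠ 0`. -/
def avg (T : ℕ) (m : Fin T → ℝ) : Fin T → ℝ := fun t =>
  if (t : ℕ) = 0 then ((∑ u : Fin T, m u) - 1 / 2) / T + 1 / 2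
  else ((∑ u : Fin T, m u) - 1 / 2) / T

open Matrix

section AllOnes

variable {n : Type*}

def allOnes (n : Type*) : Matrix n n ℝ := of fun _ _ => 1

def centering (n : Type*) [Fintype n] [DecidableEq n] : Matrix n n ℝ :=
  1 - (Fintype.card n : ℝ)⁻¹ • allOnes n

theorem conjTranspose_allOnes : (allOnes n)ᴴ = allOnes n := by
  ext i j
  simp [allOnes]

variable [Fintype n]

theorem allOnes_mul_allOnes : allOnes n * allOnes n = (Fintype.card n : ℝ) • allOnes n := by
  ext i j
  simp [mul_apply, allOnes]

variable [DecidableEq n]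

theorem conjTranspose_centering : (centering n)ᴴ = centering n := by
  rw [centering, conjTranspose_sub, conjTranspose_one, conjTranspose_smul, conjTranspose_allOnes,
    star_trivial]

variable [Nonempty n]

theorem allOnes_mul_centering : allOnes n * centering n = 0 := by
  rw [centering, mul_sub, mul_one, Matrix.mul_smul, allOnes_mul_allOnes, smul_smul,
    inv_mul_cancel₀ (by simp), one_smul, sub_self]

theorem posSemidef_centering : (centering n).PosSemidef := by
  have hQQ : centering n * centering n = centering n := by
    conv_lhs => enter [1]; rw [centering]
    rw [sub_mul, one_mul, smul_mul, allOnes_mul_centering, smul_zero, sub_zero]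
  simpa only [conjTranspose_centering, hQQ] using posSemidef_conjTranspose_mul_self (centering n)

theorem centering_mul_mul_centering {A : Matrix n n ℝ} {s : ℝ}
    (hl : allOnes n * A = s • allOnes n) (hr : A * allOnes n = s • allOnes n) :
    centering n * A * centering n = A - (s / Fintype.card n) • allOnes n := by
  have hQA : centering n * A = A - (s / Fintype.card n) • allOnes n := by
    rw [centering, sub_mul, one_mul, smul_mul, hl, smul_smul, ← div_eq_inv_mul]
  rw [hQA, sub_mul, smul_mul, allOnes_mul_centering, smul_zero, sub_zero, centering, mul_sub,
    mul_one, Matrix.mul_smul, hr, smul_smul, ← div_eq_inv_mul]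

end AllOnes

open scoped MatrixOrder in
theorem Matrix.PosSemidef.trace_mul_nonneg {n : Type*} [Fintype n] [DecidableEq n]
    {A B : Matrix n n ℝ} (hA : A.PosSemidef) (hB : B.PosSemidef) : 0 ≤ (A * B).trace := by
  obtain ⟨C, rfl⟩ := CStarAlgebra.nonneg_iff_eq_star_mul_self.mp hA.nonneg
  rw [mul_assoc, trace_mul_comm, star_eq_conjTranspose]
  exact (hB.mul_mul_conjTranspose_same C).trace_nonneg

section Circulant

variable {T : ℕ} [NeZero T]

theorem circ_mul_allOnes (c : Fin T → ℝ) :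
    circ T c * allOnes (Fin T) = (∑ t, c t) • allOnes _ := by
  ext i j
  simpa [mul_apply, circ, allOnes] using (Equiv.subRight i).sum_comp c

theorem allOnes_mul_circ (c : Fin T → ℝ) :
    allOnes (Fin T) * circ T c = (∑ t, c t) • allOnes _ := by
  ext i j
  simpa [mul_apply, circ, allOnes] using (Equiv.subLeft j).sum_comp c

theorem circ_avg (m : Fin T → ℝ) :
    circ T (avg T m) = (((∑ t, m t) - 1 / 2) / T) • allOnes (Fin T) + (1 / 2 : ℝ) • 1 := by
  ext i j
  by_cases h : i = j
  · simp [h, circ, avg, allOnes]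
  · simp [h, circ, avg, allOnes, Fin.val_eq_zero_iff, sub_eq_zero, Ne.symm h]

end Circulant

section Border

variable {T : ℕ}

theorem border_add (C C' : Matrix (Fin T) (Fin T) ℝ) (b b' d d' : ℝ) :
    border T C b d + border T C' b' d' = border T (C + C') (b + b') (d + d') := by
  ext (i | i) (j | j) <;> simp [border]

theorem border_sub (C C' : Matrix (Fin T) (Fin T) ℝ) (b b' d d' : ℝ) :
    border T C b d - border T C' b' d' = border T (C - C') (b - b') (d - d') := by
  ext (i | i) (j | j) <;> simp [border]

theorem conjTranspose_border {C : Matrix (Fin T) (Fin T) ℝ} (hC : Cᴴ = C) (b d : ℝ) :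
    (border T C b d)ᴴ = border T C b d := by
  rw [border, fromBlocks_conjTranspose, hC]
  rfl

theorem posSemidef_border_zero {K : Matrix (Fin T) (Fin T) ℝ} (hK : K.PosSemidef) :
    (border T K 0 0).PosSemidef := by
  convert hK.conjTranspose_mul_mul_same
    (fromCols (1 : Matrix (Fin T) (Fin T) ℝ) (0 : Matrix _ Unit ℝ)) using 1
  ext (i | i) (j | j) <;> simp [border, mul_apply, fromCols, one_apply]

theorem trace_border_mul_border (C C' : Matrix (Fin T) (Fin T) ℝ) (b b' d d' : ℝ) :
    (border T C b d * border T C' b' d').trace = (C * C').trace + 2 * T * (b * b') + d * d' := by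
  simp only [trace, border, diag_apply, mul_apply, Fintype.sum_sum_type, Finset.univ_unique,
    PUnit.default_eq_unit, Finset.sum_singleton, Finset.sum_add_distrib, fromBlocks_apply₁₁,
    fromBlocks_apply₂₁, of_apply, fromBlocks_apply₁₂, Finset.sum_const, Finset.card_univ,
    Fintype.card_fin, nsmul_eq_mul, Finset.card_singleton, one_smul, fromBlocks_apply₂₂]
  ring

def averaging (T : ℕ) : Matrix (Fin T ⊕ Unit) (Fin T ⊕ Unit) ℝ :=
  border T ((T : ℝ)⁻¹ • allOnes (Fin T)) 0 1

theorem conjTranspose_averaging : (averaging T)ᴴ = averaging T :=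
  conjTranspose_border (by rw [conjTranspose_smul, conjTranspose_allOnes, star_trivial]) 0 1

theorem averaging_mul_border_mul_averaging [NeZero T] {C : Matrix (Fin T) (Fin T) ℝ} {s : ℝ}
    (hC : allOnes (Fin T) * C = s • allOnes (Fin T)) (b d : ℝ) :
    averaging T * border T C b d * averaging T = border T ((s / T) • allOnes (Fin T)) b d := by
  have hT : (T : ℝ) ≠ 0 := NeZero.ne _
  have hcol : ∀ j, ∑ i, C i j = s := fun j => by
    simpa [mul_apply, allOnes] using congrFun (congrFun hC j) j
  ext (i | i) (j | j) <;>
    simp [averaging, border, mul_apply, Fintype.sum_sum_type, allOnes, ← Finset.mul_sum, hcol] <;>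
    field_simp

theorem trace_momentMatrix_mul_border_sub (v μ : ℝ) (P C C' : Matrix (Fin T) (Fin T) ℝ)
    (b d : ℝ) :
    (momentMatrix T v μ P * border T C b d).trace - (momentMatrix T v μ P * border T C' b d).trace
      = v * (P * (C - C')).trace + μ ^ 2 * (allOnes (Fin T) * (C - C')).trace := by
  rw [momentMatrix, trace_border_mul_border, trace_border_mul_border]
  have hdiff : ((v • P + μ ^ 2 • allOnes (Fin T)) * C).trace
      - ((v • P + μ ^ 2 • allOnes (Fin T)) * C').trace
      = v * (P * (C - C')).trace + μ ^ 2 * (allOnes (Fin T) * (C - C')).trace := by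
    rw [← trace_sub, ← mul_sub, add_mul, trace_add, Matrix.smul_mul, Matrix.smul_mul,
      trace_smul, trace_smul, smul_eq_mul, smul_eq_mul]
  rw [← hdiff]
  unfold allOnes
  ring

end Border

section CompoundSymmetric

variable {T : ℕ} [NeZero T] (m : Fin T → ℝ)

theorem allOnes_mul_circ_sub_smul_one (c : ℝ) :
    allOnes (Fin T) * (circ T m - c • 1) = ((∑ t, m t) - c) • allOnes (Fin T) := by
  rw [mul_sub, allOnes_mul_circ, Matrix.mul_smul, mul_one, sub_smul]

theorem circ_sub_smul_one_mul_allOnes (c : ℝ) :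
    (circ T m - c • 1) * allOnes (Fin T) = ((∑ t, m t) - c) • allOnes (Fin T) := by
  rw [sub_mul, circ_mul_allOnes, Matrix.smul_mul, one_mul, sub_smul]

theorem border_circ_avg (b d : ℝ) :
    border T (circ T (avg T m)) b d = averaging T * border T (circ T m) b d * averaging T
      + border T ((1 / 2 : ℝ) • centering (Fin T)) 0 0 := by
  rw [averaging_mul_border_mul_averaging (allOnes_mul_circ m), border_add, add_zero, add_zero,
    circ_avg, centering, Fintype.card_fin]
  congr 1
  match_scalars <;> ring

theorem border_circ_avg_sub_constrMatrix (b d γ β : ℝ) :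
    border T (circ T (avg T m)) b d - constrMatrix T γ β
      = averaging T * (border T (circ T m) b d - constrMatrix T γ β) * averaging T := by
  rw [constrMatrix, border_sub, border_sub,
    averaging_mul_border_mul_averaging (allOnes_mul_circ_sub_smul_one m _), circ_avg,
    add_sub_cancel_right]

theorem circ_sub_circ_avg :
    circ T m - circ T (avg T m)
      = centering (Fin T) * (circ T m - (1 / 2 : ℝ) • 1) * centering (Fin T) := by
  rw [centering_mul_mul_centering (allOnes_mul_circ_sub_smul_one m _)
    (circ_sub_smul_one_mul_allOnes m _), circ_avg, Fintype.card_fin]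
  abel

theorem trace_momentMatrix_mul_border_circ_avg_le {v : ℝ} (hv : 0 ≤ v) (μ : ℝ)
    {P : Matrix (Fin T) (Fin T) ℝ} (hP : P.PosSemidef)
    (hm : (circ T m - (1 / 2 : ℝ) • 1).PosSemidef) (b d : ℝ) :
    (momentMatrix T v μ P * border T (circ T (avg T m)) b d).trace
      ≤ (momentMatrix T v μ P * border T (circ T m) b d).trace := by
  have hJ : allOnes (Fin T) * (circ T m - circ T (avg T m)) = 0 := by
    rw [circ_sub_circ_avg, ← mul_assoc, ← mul_assoc, allOnes_mul_centering, zero_mul, zero_mul]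
  have hD : (circ T m - circ T (avg T m)).PosSemidef := by
    rw [circ_sub_circ_avg]
    simpa only [conjTranspose_centering] using hm.conjTranspose_mul_mul_same (centering (Fin T))
  have h := trace_momentMatrix_mul_border_sub v μ P (circ T m) (circ T (avg T m)) b d
  rw [hJ, trace_zero, mul_zero, add_zero] at h
  linarith [mul_nonneg hv (hP.trace_mul_nonneg hD)]

end CompoundSymmetric

theorem compound_symmetric_feasibility (T : ℕ) (hT : 1 ≤ T) (ε : ℝ)
    (hε : ε ∈ Set.Ioo (0 : ℝ) 1) (ρ : Fin T → ℝ)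
    (hP : (circ T ρ).PosSemidef)
    (v μbar : ℝ) (hv : 0 ≤ v)
    (m : Fin T → ℝ) (mT mT1 β γ : ℝ)
    (hpsd : (border T (circ T m) mT mT1).PosSemidef)
    (htr : β + (1 / ε) *
      ((momentMatrix T v μbar (circ T ρ)) * (border T (circ T m) mT mT1)).trace ≤ 0)
    (hpsd2 : ((border T (circ T m) mT mT1) - constrMatrix T γ β).PosSemidef) :
    (border T (circ T (avg T m)) mT mT1).PosSemidef ∧
    β + (1 / ε) *
      ((momentMatrix T v μbar (circ T ρ)) * (border T (circ T (avg T m)) mT mT1)).trace ≤ 0 ∧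
    ((border T (circ T (avg T m)) mT mT1) - constrMatrix T γ β).PosSemidef := by
  have : NeZero T := ⟨by omega⟩
  have hconj {M} (hM : PosSemidef M) : (averaging T * M * averaging T).PosSemidef := by
    simpa only [conjTranspose_averaging] using hM.conjTranspose_mul_mul_same (averaging T)
  refine ⟨?_, ?_, ?_⟩
  · rw [border_circ_avg]
    exact (hconj hpsd).add (posSemidef_border_zero (posSemidef_centering.smul (by norm_num)))
  · have hle := trace_momentMatrix_mul_border_circ_avg_le m hv μbar hP
      (hpsd2.submatrix Sum.inl) mT mT1
    have hε0 : 0 ≤ 1 / ε := one_div_nonneg.mpr hε.1.le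
    exact le_trans (by gcongr) htr
  · rw [border_circ_avg_sub_constrMatrix]
    exact hconj hpsd2
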